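/- Let R be a discrete valuation domain with prime element p and let λ be an uncountable regular cardinal. Then every reduced torsion λ-pure projective R-module is complete in the p^λ-adic topology. -/

import Mathlib

universe u v w

open Ordinal

/-- The submodule `p^σ G`, defined by transfinite recursion. -/
noncomputable def pPow (R : Type u) [CommRing R] (p : R) (G : Type v) [AddCommGroup G]
    [Module R G] (σ : Ordinal.{w}) : Submodule R G :=
  Ordinal.limitRecOn σ ⊤ (fun _ N => N.map (LinearMap.lsmul R G p))
    (fun o _ ih => ⨅ ρ : Set.Iio o, ih ρ.1 ρ.2)


/-- `G` is (Hausdorff and) complete in the `p^λ`-adic topology: the canonical map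
`G → lim_{σ<λ} G/p^σ G` into the inverse limit is bijective. -/
def IsPLamComplete (R : Type u) [CommRing R] (p : R) (lam : Ordinal.{w}) (G : Type v)
    [AddCommGroup G] [Module R G] : Prop :=
  (∀ g : G, (∀ σ < lam, g ∈ pPow R p G σ) → g = 0) ∧
  ∀ x : (∀ σ : Set.Iio lam, G ⧸ pPow R p G σ.1),
    (∀ σ τ : Set.Iio lam, σ.1 ≤ τ.1 → ∀ g : G,
      Submodule.Quotient.mk g = x τ → Submodule.Quotient.mk g = x σ) →
    ∃ g : G, ∀ σ : Set.Iio lam, Submodule.Quotient.mk g = x σ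

/-- A module is `<κ`-presented if it admits a presentation with fewer than `κ` generators
and fewer than `κ` relations. -/
def IsLtPresented (R : Type u) [Ring R] (κ : Cardinal.{u}) (M : Type v) [AddCommGroup M]
    [Module R M] : Prop :=
  ∃ (ι : Type u) (f : (ι →₀ R) →ₗ[R] M) (s : Set (ι →₀ R)),
    Cardinal.mk ι < κ ∧ Function.Surjective f ∧ Cardinal.mk s < κ ∧
      Submodule.span R s = LinearMap.ker f

/-- A surjection `π : B → C` is a `κ`-pure epimorphism (equivalently, the short exact
sequence `0 → ker π → B → C → 0` is `κ`-pure) if every homomorphism from a `<κ`-presented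
module to `C` factors through `π`. -/
def IsPureEpi (R : Type u) [Ring R] (κ : Cardinal.{u}) {B : Type v} {C : Type w}
    [AddCommGroup B] [Module R B] [AddCommGroup C] [Module R C] (π : B →ₗ[R] C) : Prop :=
  ∀ (Y : Type u) [AddCommGroup Y] [Module R Y], IsLtPresented R κ Y →
    ∀ f : Y →ₗ[R] C, ∃ g : Y →ₗ[R] B, π ∘ₗ g = f

/-- A module is `κ`-pure projective if it is projective with respect to all `κ`-pure
short exact sequences. -/
def IsPureProjective (R : Type u) [Ring R] (κ : Cardinal.{u}) (M : Type v) [AddCommGroup M]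
    [Module R M] : Prop :=
  ∀ (B C : Type v) [AddCommGroup B] [Module R B] [AddCommGroup C] [Module R C]
    (π : B →ₗ[R] C), Function.Surjective π → IsPureEpi R κ π →
      ∀ f : M →ₗ[R] C, ∃ g : M →ₗ[R] B, π ∘ₗ g = f

/-- The `κ`-pure projective dimension of `M` is at least two: there is no `κ`-pure short
exact sequence `0 → P₁ → P₀ → M → 0` with `P₀` and `P₁` `κ`-pure projective. -/
def PureProjDimGE2 (R : Type u) [Ring R] (κ : Cardinal.{u}) (M : Type v) [AddCommGroup M]
    [Module R M] : Prop :=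
  ¬ ∃ (P : Type v) (_ : AddCommGroup P) (_ : Module R P) (π : P →ₗ[R] M),
      IsPureProjective R κ P ∧ Function.Surjective π ∧ IsPureEpi R κ π ∧
        IsPureProjective R κ ↥(LinearMap.ker π)

/-!
A `κ`-pure projective module `G` is a direct summand of the direct sum `H` of its submodules
spanned by fewer than `κ` elements, because the summation map `H → G` is `κ`-pure. Each summand
`N` is torsion with fewer than `κ` generators; its finitely generated submodules are artinian
(torsion over a noetherian ring of dimension one), so the trace of the chain `p^σ N` on each of
them is constant from some ordinal below `κ`, and by regularity of `κ` the chain `p^σ N` itself is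
constant from some `τ_N < κ`. A `p^κ`-adic Cauchy net in `H` then converges: on the component `N`
it is constant modulo `p^{τ_N} N` from `τ_N` on, and only finitely many of these residues are
nonzero since `κ` has uncountable cofinality. Both this and separation (`p^κ N = p^∞ N` plus
reducedness of `G`) pass to the direct summand `G`.
-/

section PPow

variable {R : Type u} [CommRing R] (p : R) {G : Type v} [AddCommGroup G] [Module R G]

theorem pPow_zero : pPow R p G (0 : Ordinal.{w}) = ⊤ :=
  Ordinal.limitRecOn_zero ..

theorem pPow_add_one (σ : Ordinal.{w}) :
    pPow R p G (σ + 1) = (pPow R p G σ).map (LinearMap.lsmul R G p) :=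
  Ordinal.limitRecOn_add_one ..

theorem mem_pPow_of_isSuccLimit {o : Ordinal.{w}} (ho : Order.IsSuccLimit o) {x : G} :
    x ∈ pPow R p G o ↔ ∀ ρ < o, x ∈ pPow R p G ρ := by
  rw [pPow, Ordinal.limitRecOn_limit _ _ _ _ ho, Submodule.mem_iInf, Subtype.forall]
  rfl

theorem pPow_antitone : Antitone (pPow R p G : Ordinal.{w} → Submodule R G) := by
  intro σ τ hστ
  induction τ using Ordinal.limitRecOn with
  | zero => rw [nonpos_iff_eq_zero.1 hστ]
  | add_one τ ih =>
    rcases Order.le_succ_iff_eq_or_le.1 hστ with rfl | h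
    · exact le_rfl
    · rw [pPow_add_one]
      rintro _ ⟨y, hy, rfl⟩
      exact ih h (Submodule.smul_mem _ p hy)
  | limit o ho ih =>
    rcases hστ.eq_or_lt with rfl | h
    · exact le_rfl
    · exact fun x hx => (mem_pPow_of_isSuccLimit p ho).1 hx σ h

theorem pPow_map_le {H : Type*} [AddCommGroup H] [Module R H] (f : G →ₗ[R] H)
    (σ : Ordinal.{w}) : (pPow R p G σ).map f ≤ pPow R p H σ := by
  induction σ using Ordinal.limitRecOn with
  | zero => simp [pPow_zero]
  | add_one σ ih =>
    rw [pPow_add_one, pPow_add_one, Submodule.map_le_iff_le_comap]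
    rintro _ ⟨y, hy, rfl⟩
    exact ⟨f y, ih ⟨y, hy, rfl⟩, by simp⟩
  | limit o ho ih =>
    rintro _ ⟨y, hy, rfl⟩
    exact (mem_pPow_of_isSuccLimit p ho).2 fun ρ hρ =>
      ih ρ hρ ⟨y, (mem_pPow_of_isSuccLimit p ho).1 hy ρ hρ, rfl⟩

theorem map_mem_pPow {H : Type*} [AddCommGroup H] [Module R H] (f : G →ₗ[R] H)
    {σ : Ordinal.{w}} {x : G} (hx : x ∈ pPow R p G σ) : f x ∈ pPow R p H σ :=
  pPow_map_le p f σ ⟨x, hx, rfl⟩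

theorem pPow_le_of_le_add_one {τ : Ordinal.{w}} (h : pPow R p G τ ≤ pPow R p G (τ + 1))
    (σ : Ordinal.{w}) : pPow R p G τ ≤ pPow R p G σ := by
  induction σ using Ordinal.limitRecOn with
  | zero => simp [pPow_zero]
  | add_one σ ih => exact h.trans (by rw [pPow_add_one, pPow_add_one]; exact Submodule.map_mono ih)
  | limit o ho ih => exact fun x hx => (mem_pPow_of_isSuccLimit p ho).2 fun ρ hρ => ih ρ hρ hx

open DirectSum in
theorem mem_pPow_directSum {J : Type*} {Y : J → Type*} [∀ j, AddCommGroup (Y j)]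
    [∀ j, Module R (Y j)] {σ : Ordinal.{w}} {x : ⨁ j, Y j} :
    x ∈ pPow R p (⨁ j, Y j) σ ↔ ∀ j, x j ∈ pPow R p (Y j) σ := by
  classical
  refine ⟨fun hx j => map_mem_pPow p (component R J Y j) hx, fun hx => ?_⟩
  rw [← sum_support_of x]
  exact Submodule.sum_mem _ fun j _ => map_mem_pPow p (lof R J Y j) (hx j)

end PPow

theorem Antitone.exists_forall_ge_eq {α β : Type*} [Preorder α] [Nonempty α] [PartialOrder β]
    [WellFoundedLT β] {f : α → β} (hf : Antitone f) : ∃ a, ∀ b, a ≤ b → f b = f a := by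
  obtain ⟨_, ⟨a, rfl⟩, hmin⟩ := wellFounded_lt.has_min (Set.range f) (Set.range_nonempty f)
  exact ⟨a, fun b hab => (hf hab).eq_of_not_lt (hmin _ ⟨b, rfl⟩)⟩

theorem Cardinal.mk_finset_lt {α : Type*} {κ : Cardinal} (hκ : Cardinal.aleph0 ≤ κ)
    (hα : Cardinal.mk α < κ) : Cardinal.mk (Finset α) < κ := by
  cases finite_or_infinite α
  · exact (Cardinal.lt_aleph0_of_finite _).trans_le hκ
  · rwa [Cardinal.mk_finset_of_infinite]

theorem isArtinian_of_isTorsion {R M : Type*} [CommRing R] [IsNoetherianRing R]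
    [Ring.KrullDimLE 1 R] [AddCommGroup M] [Module R M] [Module.Finite R M]
    (hM : Module.IsTorsion R M) : IsArtinian R M := by
  obtain ⟨r, hr_ann, hr⟩ := Submodule.annihilator_top_inter_nonZeroDivisors hM
  have hrM : Module.IsTorsionBy R M r := fun x => Submodule.mem_annihilator.1 hr_ann x trivial
  let := hrM.module
  have : IsArtinianRing (R ⧸ Ideal.span {r}) := isArtinian_of_tower R
    (isFiniteLength_iff_isNoetherian_isArtinian.1 (isFiniteLength_quotient_span_singleton R hr)).2
  have : Module.Finite (R ⧸ Ideal.span {r}) M := Module.Finite.of_restrictScalars_finite R _ M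
  exact isArtinian_of_surjective_algebraMap (Ideal.Quotient.mk_surjective (I := Ideal.span {r}))

theorem Module.IsTorsion.submodule {R M : Type*} [CommRing R] [AddCommGroup M] [Module R M]
    (hM : Module.IsTorsion R M) (N : Submodule R M) : Module.IsTorsion R N := fun x =>
  let ⟨a, ha⟩ := @hM x
  ⟨a, Subtype.ext ha⟩

theorem exists_pPow_le_of_isTorsion {R : Type u} [CommRing R] [IsNoetherianRing R]
    [Ring.KrullDimLE 1 R] (p : R) {T : Type v} [AddCommGroup T] [Module R T]
    (hT : Module.IsTorsion R T) {κ : Cardinal.{v}} (hκ : κ.IsRegular) {S : Set T}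
    (hS : Submodule.span R S = ⊤) (hSκ : Cardinal.mk S < κ) :
    ∃ τ < κ.ord, ∀ σ : Ordinal.{v}, pPow R p T τ ≤ pPow R p T σ := by
  let M : Finset S → Submodule R T := fun F => Submodule.span R (Subtype.val '' (F : Set S))
  have hM_mono : Monotone M := fun F F' h => Submodule.span_mono (Set.image_mono h)
  have hM_top : ⨆ F, M F = ⊤ := by
    refine eq_top_iff.2 (hS ▸ Submodule.span_le.2 fun x hx => ?_)
    exact Submodule.mem_iSup_of_mem {⟨x, hx⟩} (Submodule.subset_span ⟨⟨x, hx⟩, by simp, rfl⟩)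
  have : Nonempty (Set.Iio κ.ord) := ⟨⟨0, Cardinal.ord_pos.2 hκ.pos⟩⟩
  have hstab : ∀ F, ∃ τ : Set.Iio κ.ord, ∀ σ, τ ≤ σ →
      (pPow R p T σ.1).comap (M F).subtype = (pPow R p T τ.1).comap (M F).subtype := by
    intro F
    have : Module.Finite R (M F) := Module.Finite.span_of_finite R (F.finite_toSet.image _)
    have : IsArtinian R (M F) := isArtinian_of_isTorsion (hT.submodule _)
    exact Antitone.exists_forall_ge_eq fun σ τ h => Submodule.comap_mono (pPow_antitone p h)
  choose τF hτF using hstab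
  have hτ : ⨆ F, (τF F).1 < κ.ord := Ordinal.iSup_lt_of_lt_cof
    (by rw [hκ.cof_ord]; exact Cardinal.mk_finset_lt hκ.aleph0_le (by simpa using hSκ))
    fun F => (τF F).2
  refine ⟨_, hτ, pPow_le_of_le_add_one p fun x hx => ?_⟩
  obtain ⟨F, hxF⟩ := (Submodule.mem_iSup_of_directed M hM_mono.directed_le).1
    (hM_top ▸ Submodule.mem_top : x ∈ ⨆ F, M F)
  have hle : τF F ≤ ⟨_, hτ⟩ := Ordinal.le_iSup (fun F => (τF F).1) F
  have hle' : τF F ≤ ⟨_, (Cardinal.isSuccLimit_ord hκ.aleph0_le).add_one_lt hτ⟩ :=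
    hle.trans (Subtype.mk_le_mk.2 le_self_add)
  exact (SetLike.ext_iff.1 ((hτF F _ hle').trans (hτF F _ hle).symm) ⟨x, hxF⟩).2 hx

section Completeness

variable {R : Type u} [CommRing R] (p : R) (lam : Ordinal.{w})

/-- Every `p^λ`-adic Cauchy net `(b σ)_{σ < λ}` in `G` has a limit. -/
def CauchyNetsConverge (G : Type v) [AddCommGroup G] [Module R G] : Prop :=
  ∀ b : Set.Iio lam → G, (∀ σ τ, σ ≤ τ → b τ - b σ ∈ pPow R p G σ.1) →
    ∃ g, ∀ σ, g - b σ ∈ pPow R p G σ.1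

variable {p lam} {G : Type v} [AddCommGroup G] [Module R G]

theorem isPLamComplete_of_cauchyNetsConverge
    (hsep : ∀ g : G, (∀ σ < lam, g ∈ pPow R p G σ) → g = 0)
    (hG : CauchyNetsConverge p lam G) : IsPLamComplete R p lam G := by
  refine ⟨hsep, fun x hx => ?_⟩
  choose b hb using fun σ => Submodule.Quotient.mk_surjective _ (x σ)
  obtain ⟨g, hg⟩ := hG b fun σ τ hστ => (Submodule.Quotient.eq _).1 <| by
    rw [hb σ, hx σ τ hστ _ (hb τ)]
  exact ⟨g, fun σ => by rw [← hb σ, Submodule.Quotient.eq]; exact hg σ⟩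

theorem CauchyNetsConverge.of_retract {H : Type*} [AddCommGroup H] [Module R H]
    (hH : CauchyNetsConverge p lam H) (s : G →ₗ[R] H) (π : H →ₗ[R] G)
    (hπs : ∀ g, π (s g) = g) : CauchyNetsConverge p lam G := by
  intro b hb
  obtain ⟨h, hh⟩ := hH (s ∘ b) fun σ τ hστ => by
    simpa using map_mem_pPow p s (hb σ τ hστ)
  exact ⟨π h, fun σ => by simpa [hπs] using map_mem_pPow p π (hh σ)⟩

theorem Set.finite_of_aleph0_lt_cof {J : Type*} (hlam : Cardinal.aleph0 < lam.cof)
    (A : Set J) (τ : J → Ordinal.{w}) (hτ : ∀ j, τ j < lam)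
    (hA : ∀ σ < lam, {j ∈ A | τ j ≤ σ}.Finite) : A.Finite := by
  by_contra hinf
  let e := Set.Infinite.natEmbedding A hinf
  have hsup : ⨆ n, τ (e n) < lam := Ordinal.lift_iSup_lt_of_lt_cof
    (by simpa using hlam) fun n => hτ (e n)
  refine Set.infinite_range_of_injective (Subtype.val_injective.comp e.injective)
    ((hA _ hsup).subset ?_)
  rintro _ ⟨n, rfl⟩
  exact ⟨(e n).2, Ordinal.le_iSup (fun n => τ (e n)) n⟩

theorem sub_mem_pPow_of_sub_mem_pPow {Y : Type*} [AddCommGroup Y] [Module R Y]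
    {b : Set.Iio lam → Y} (hb : ∀ σ τ, σ ≤ τ → b τ - b σ ∈ pPow R p Y σ.1)
    {τ : Set.Iio lam} (hτ : ∀ σ : Ordinal.{w}, pPow R p Y τ.1 ≤ pPow R p Y σ) {y : Y}
    (hy : y - b τ ∈ pPow R p Y τ.1) (σ : Set.Iio lam) : y - b σ ∈ pPow R p Y σ.1 := by
  have h₁ := hb σ (max σ τ) le_sup_left
  have h₂ := hτ σ (hb τ (max σ τ) le_sup_right)
  have : y - b σ = (y - b τ) - (b (max σ τ) - b τ) + (b (max σ τ) - b σ) := by abel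
  rw [this]
  exact add_mem (sub_mem (hτ σ hy) h₂) h₁

open DirectSum in
theorem cauchyNetsConverge_directSum {J : Type*} {Y : J → Type*} [∀ j, AddCommGroup (Y j)]
    [∀ j, Module R (Y j)] (hlam : Cardinal.aleph0 < lam.cof) (τ : J → Set.Iio lam)
    (hτ : ∀ j (σ : Ordinal.{w}), pPow R p (Y j) (τ j).1 ≤ pPow R p (Y j) σ) :
    CauchyNetsConverge p lam (⨁ j, Y j) := by
  classical
  intro b hb
  have hbj : ∀ j σ τ, σ ≤ τ → b τ j - b σ j ∈ pPow R p (Y j) σ.1 := fun j σ τ hστ =>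
    (mem_pPow_directSum p).1 (hb σ τ hστ) j
  let A := {j | b (τ j) j ∉ pPow R p (Y j) (τ j).1}
  have hA : A.Finite := by
    refine Set.finite_of_aleph0_lt_cof hlam A (fun j => (τ j).1) (fun j => (τ j).2)
      fun σ hσ => (b ⟨σ, hσ⟩).support.finite_toSet.subset fun j ⟨hjA, hjσ⟩ => ?_
    rw [Finset.mem_coe, DFinsupp.mem_support_iff]
    intro h0
    apply hjA
    simpa [h0] using hbj j (τ j) ⟨σ, hσ⟩ hjσ
  let c : ⨁ j, Y j := DFinsupp.mk hA.toFinset fun j => b (τ j) j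
  refine ⟨c, fun σ => (mem_pPow_directSum p).2 fun j => ?_⟩
  rw [DFinsupp.sub_apply]
  refine sub_mem_pPow_of_sub_mem_pPow (hbj j) (hτ j) ?_ σ
  by_cases hj : j ∈ A
  · simp [c, DFinsupp.mk_apply, hA.mem_toFinset.2 hj]
  · have hj' : b (τ j) j ∈ pPow R p (Y j) (τ j).1 := not_not.1 hj
    simpa [c, DFinsupp.mk_apply, hA.mem_toFinset, hj] using hj'

open DirectSum in
theorem mem_pPow_directSum_of_forall_lt {J : Type*} {Y : J → Type*} [∀ j, AddCommGroup (Y j)]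
    [∀ j, Module R (Y j)] (τ : J → Set.Iio lam)
    (hτ : ∀ j (σ : Ordinal.{w}), pPow R p (Y j) (τ j).1 ≤ pPow R p (Y j) σ)
    {x : ⨁ j, Y j} (hx : ∀ σ < lam, x ∈ pPow R p (⨁ j, Y j) σ) (σ : Ordinal.{w}) :
    x ∈ pPow R p (⨁ j, Y j) σ :=
  (mem_pPow_directSum p).2 fun j => hτ j σ ((mem_pPow_directSum p).1 (hx _ (τ j).2) j)

end Completeness

section SmallSpans

open DirectSum

variable (R : Type u) [CommRing R] (κ : Cardinal.{u}) (G : Type u) [AddCommGroup G] [Module R G]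

noncomputable def sumSmallSpans :
    (⨁ S : {S : Set G // Cardinal.mk S < κ}, Submodule.span R S.1) →ₗ[R] G :=
  toModule R _ G fun S => (Submodule.span R S.1).subtype

variable {R κ G}

theorem sumSmallSpans_surjective (hκ : 1 < κ) : Function.Surjective (sumSmallSpans R κ G) := by
  classical
  intro g
  refine ⟨lof R _ (fun S : {S : Set G // Cardinal.mk S < κ} => Submodule.span R S.1)
    ⟨{g}, by rwa [Cardinal.mk_singleton]⟩ ⟨g, Submodule.mem_span_singleton_self g⟩, ?_⟩
  simp [sumSmallSpans, toModule_lof]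

theorem isPureEpi_sumSmallSpans : IsPureEpi R κ (sumSmallSpans R κ G) := by
  classical
  rintro Y _ _ ⟨ι, fY, -, hι, hfY, -, -⟩ f
  let S : Set G := Set.range fun i => f (fY (Finsupp.single i 1))
  have hS : Cardinal.mk S < κ := Cardinal.mk_range_le.trans_lt hι
  have hmem : ∀ y, f y ∈ Submodule.span R S := by
    intro y
    obtain ⟨z, rfl⟩ := hfY y
    induction z using Finsupp.induction_linear with
    | zero => simp
    | add z z' hz hz' => simpa using add_mem hz hz'
    | single i r =>
      rw [← Finsupp.smul_single_one, map_smul, map_smul]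
      exact Submodule.smul_mem _ r (Submodule.subset_span ⟨i, rfl⟩)
  refine ⟨lof R _ (fun S : {S : Set G // Cardinal.mk S < κ} => Submodule.span R S.1) ⟨S, hS⟩
    ∘ₗ f.codRestrict _ hmem, ?_⟩
  ext y
  simp [sumSmallSpans, toModule_lof]

theorem IsPureProjective.exists_rightInverse_sumSmallSpans (hκ : 1 < κ)
    (hG : IsPureProjective R κ G) : ∃ s : G →ₗ[R] _, ∀ g, sumSmallSpans R κ G (s g) = g := by
  obtain ⟨s, hs⟩ := hG _ G _ (sumSmallSpans_surjective hκ) isPureEpi_sumSmallSpans LinearMap.id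
  exact ⟨s, LinearMap.congr_fun hs⟩

end SmallSpans

theorem stmt9_general (R : Type u) [CommRing R] [IsDomain R] [IsDiscreteValuationRing R]
    (p : R)
    (κ : Cardinal.{u}) (hreg : κ.IsRegular) (hunc : Cardinal.aleph0 < κ)
    (G : Type u) [AddCommGroup G] [Module R G]
    (htor : Module.IsTorsion R G)
    (hred : ∀ g : G, (∀ σ : Ordinal.{u}, g ∈ pPow R p G σ) → g = 0)
    (hpp : IsPureProjective R κ G) :
    IsPLamComplete R p κ.ord G := by
  obtain ⟨s, hs⟩ := hpp.exists_rightInverse_sumSmallSpans (Cardinal.one_lt_aleph0.trans hunc)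
  have hstab (S : {S : Set G // Cardinal.mk S < κ}) : ∃ τ < κ.ord,
      ∀ σ : Ordinal.{u}, pPow R p (Submodule.span R S.1) τ ≤ pPow R p _ σ :=
    exists_pPow_le_of_isTorsion p (htor.submodule _) hreg Submodule.span_span_coe_preimage
      ((Cardinal.mk_preimage_of_injective _ _ Subtype.val_injective).trans_lt S.2)
  choose τ hτ hτ_stab using hstab
  have hcof : Cardinal.aleph0 < κ.ord.cof := by rwa [hreg.cof_ord]
  refine isPLamComplete_of_cauchyNetsConverge (fun g hg => hred g fun σ => ?_)
    ((cauchyNetsConverge_directSum hcof (fun S => ⟨τ S, hτ S⟩) hτ_stab).of_retract s _ hs)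
  simpa [hs] using map_mem_pPow p (sumSmallSpans R κ G) <|
    mem_pPow_directSum_of_forall_lt (fun S => ⟨τ S, hτ S⟩) hτ_stab
      (fun σ hσ => map_mem_pPow p s (hg σ hσ)) σ

theorem stmt9 (R : Type u) [CommRing R] [IsDomain R] [IsDiscreteValuationRing R]
    (p : R) (hp : Irreducible p)
    (κ : Cardinal.{u}) (hreg : κ.IsRegular) (hunc : Cardinal.aleph0 < κ)
    (G : Type u) [AddCommGroup G] [Module R G]
    (htor : Module.IsTorsion R G)
    (hred : ∀ g : G, (∀ σ : Ordinal.{u}, g ∈ pPow R p G σ) → g = 0)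
    (hpp : IsPureProjective R κ G) :
    IsPLamComplete R p κ.ord G :=
  stmt9_general R p κ hreg hunc G htor hred hpp
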